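/- arXiv:2010.05249 — 8 statements merged into one kernel-verified Lean document; each statement's English description precedes it below -/
import Mathlib

section
/- Let ν > 0, η ∈ ℝ, let G_x be an n×n and G_y an m×m Hermitian positive semidefinite complex matrix, and set A_x = -(ν+iη)G_x, A_y = -(ν+iη)G_y. Then for every t > 0 and every complex n×m matrix Z, ‖exp(tA_x) · (A_x Z + Z A_y) · exp(tA_y)‖_F ≤ (√(ν² + η²) / (ν e t)) · ‖Z‖_F, where e is Euler's number. -/
/-!
Write `c = -(ν + iη)`. Diagonalising `G_x = U Λ U*` and `G_y = V M V*` by unitaries, and setting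
`W = U* Z V`, the matrix `exp(tA_x) (A_x Z + Z A_y) exp(tA_y)` becomes, in these bases, the matrix
with entries `c (λᵢ + μⱼ) exp(t c (λᵢ + μⱼ)) Wᵢⱼ`. Since `λᵢ + μⱼ ≥ 0` and `Re c = -ν`, each factor
has modulus at most `|c| · sup_{s ≥ 0} s e^{-νts} = |c| / (ν e t)`, and the Frobenius norm is
invariant under the unitary changes of basis.
-/

open scoped BigOperators ComplexOrder

/-- Frobenius norm of a complex matrix. -/
noncomputable def frobNorm {n m : ℕ} (Z : Matrix (Fin n) (Fin m) ℂ) : ℝ :=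
  Real.sqrt (∑ i, ∑ j, ‖Z i j‖ ^ 2)

open Matrix

lemma norm_mul_mul_exp_le {z : ℂ} (hz : z.re < 0) {s t : ℝ} (hs : 0 ≤ s) (ht : 0 < t) :
    ‖z * s * Complex.exp (t * z * s)‖ ≤ ‖z‖ / (-z.re * Real.exp 1 * t) := by
  have hsup : -z.re * t * s * Real.exp (-(-z.re * t * s)) * Real.exp 1 ≤ 1 := by
    have := mul_le_mul_of_nonneg_right (Real.mul_exp_neg_le_exp_neg_one (-z.re * t * s))
      (Real.exp_pos 1).le
    rwa [← Real.exp_add, neg_add_cancel, Real.exp_zero] at this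
  have hre : (t * z * s : ℂ).re = -(-z.re * t * s) := by
    simp only [Complex.mul_re, Complex.ofReal_re, Complex.ofReal_im]
    ring
  have hpos : 0 < -z.re * Real.exp 1 * t := by
    have := Real.exp_pos 1
    have : 0 < -z.re := neg_pos.mpr hz
    positivity
  rw [norm_mul, norm_mul, Complex.norm_exp, hre, Complex.norm_real, Real.norm_of_nonneg hs,
    le_div_iff₀ hpos]
  calc ‖z‖ * s * Real.exp (-(-z.re * t * s)) * (-z.re * Real.exp 1 * t)
      = ‖z‖ * (-z.re * t * s * Real.exp (-(-z.re * t * s)) * Real.exp 1) := by ring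
    _ ≤ ‖z‖ * 1 := by gcongr
    _ = ‖z‖ := mul_one _

lemma sum_sum_norm_sq_eq_re_trace {ι κ : Type*} [Fintype ι] [Fintype κ] (A : Matrix ι κ ℂ) :
    ∑ i, ∑ j, ‖A i j‖ ^ 2 = (Aᴴ * A).trace.re := by
  simp only [trace, diag_apply, mul_apply, conjTranspose_apply, Complex.re_sum]
  rw [Finset.sum_comm]
  refine Finset.sum_congr rfl fun i _ => Finset.sum_congr rfl fun j _ => ?_
  rw [Complex.sq_norm, Complex.normSq_apply]
  simp [Complex.mul_re]

lemma frobNorm_unitary_mul_mul_unitary {n m : ℕ} {U : Matrix (Fin n) (Fin n) ℂ}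
    {V : Matrix (Fin m) (Fin m) ℂ} (hU : U ∈ unitaryGroup (Fin n) ℂ)
    (hV : V ∈ unitaryGroup (Fin m) ℂ) (M : Matrix (Fin n) (Fin m) ℂ) :
    frobNorm (U * M * V) = frobNorm M := by
  have hUU : Uᴴ * U = 1 := mem_unitaryGroup_iff'.mp hU
  have hVV : V * Vᴴ = 1 := mem_unitaryGroup_iff.mp hV
  have hgram : (U * M * V)ᴴ * (U * M * V) = Vᴴ * (Mᴴ * M) * V := by
    simp only [conjTranspose_mul, Matrix.mul_assoc, ← Matrix.mul_assoc Uᴴ U, hUU, Matrix.one_mul]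
  rw [frobNorm, frobNorm, sum_sum_norm_sq_eq_re_trace, sum_sum_norm_sq_eq_re_trace, hgram,
    trace_mul_cycle, ← Matrix.mul_assoc, hVV, Matrix.one_mul]

lemma frobNorm_le_of_norm_apply_le {n m : ℕ} {A B : Matrix (Fin n) (Fin m) ℂ} {K : ℝ}
    (hK : 0 ≤ K) (h : ∀ i j, ‖A i j‖ ≤ K * ‖B i j‖) : frobNorm A ≤ K * frobNorm B := by
  rw [frobNorm, frobNorm, ← Real.sqrt_sq hK, ← Real.sqrt_mul (sq_nonneg K), Finset.mul_sum]
  gcongr with i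
  rw [Finset.mul_sum]
  gcongr with j
  rw [← mul_pow]
  gcongr
  exact h i j

section Sylvester

variable {ι κ : Type*} [Fintype ι] [DecidableEq ι] [Fintype κ] [DecidableEq κ]

lemma star_mul_sylvester_mul_eq {U : Matrix ι ι ℂ} {V : Matrix κ κ ℂ}
    (hU : U ∈ unitaryGroup ι ℂ) (hV : V ∈ unitaryGroup κ ℂ)
    (P Q : Matrix ι ι ℂ) (R S : Matrix κ κ ℂ) (Z : Matrix ι κ ℂ) :
    star U * (P * (Q * Z + Z * R) * S) * V =
      star U * P * U *
        (star U * Q * U * (star U * Z * V) + star U * Z * V * (star V * R * V)) *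
        (star V * S * V) := by
  have hU' : U * star U = 1 := mem_unitaryGroup_iff.mp hU
  have hV' : V * star V = 1 := mem_unitaryGroup_iff.mp hV
  simp only [Matrix.mul_add, Matrix.add_mul, Matrix.mul_assoc]
  simp only [← Matrix.mul_assoc U (star U), ← Matrix.mul_assoc V (star V), hU', hV',
    Matrix.one_mul]

lemma diagonal_mul_sylvester_mul_diagonal_apply (p q : ι → ℂ) (r s : κ → ℂ)
    (W : Matrix ι κ ℂ) (i : ι) (j : κ) :
    (diagonal p * (diagonal q * W + W * diagonal r) * diagonal s) i j =
      p i * (q i + r j) * s j * W i j := by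
  simp only [mul_diagonal, diagonal_mul, Matrix.add_apply]
  ring

end Sylvester

section Hermitian

variable {ι : Type*} [Fintype ι] [DecidableEq ι] {G : Matrix ι ι ℂ} (hG : G.IsHermitian)
include hG

lemma Matrix.IsHermitian.star_eigenvectorUnitary_mul_smul_mul (z : ℂ) :
    star (hG.eigenvectorUnitary : Matrix ι ι ℂ) * (z • G) * hG.eigenvectorUnitary =
      diagonal fun i => z * hG.eigenvalues i := by
  have hdiag := hG.conjStarAlgAut_star_eigenvectorUnitary
  rw [Unitary.conjStarAlgAut_apply, Unitary.coe_star, star_star] at hdiag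
  rw [Matrix.mul_smul, Matrix.smul_mul, hdiag, ← diagonal_smul]
  rfl

lemma Matrix.IsHermitian.star_eigenvectorUnitary_mul_exp_smul_mul (z : ℂ) :
    star (hG.eigenvectorUnitary : Matrix ι ι ℂ) * NormedSpace.exp (z • G) *
        hG.eigenvectorUnitary =
      diagonal fun i => Complex.exp (z * hG.eigenvalues i) := by
  set U : Matrix ι ι ℂ := ↑hG.eigenvectorUnitary
  have hUinv : U⁻¹ = star U := inv_eq_left_inv (Unitary.coe_star_mul_self _)
  have hUunit : IsUnit U := (Unitary.toUnits hG.eigenvectorUnitary).isUnit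
  rw [← hUinv, ← exp_conj' U _ hUunit, hUinv, hG.star_eigenvectorUnitary_mul_smul_mul,
    exp_diagonal]
  congr 1
  funext i
  rw [Pi.exp_def, Complex.exp_eq_exp_ℂ]

end Hermitian

theorem frobNorm_exp_mul_sylvester_mul_exp_le {n m : ℕ} {Gx : Matrix (Fin n) (Fin n) ℂ}
    {Gy : Matrix (Fin m) (Fin m) ℂ} (hGx : Gx.PosSemidef) (hGy : Gy.PosSemidef) {c : ℂ}
    (hc : c.re < 0) {t : ℝ} (ht : 0 < t) (Z : Matrix (Fin n) (Fin m) ℂ) :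
    frobNorm (NormedSpace.exp (((t : ℂ) * c) • Gx) * (c • Gx * Z + Z * c • Gy) *
        NormedSpace.exp (((t : ℂ) * c) • Gy)) ≤
      ‖c‖ / (-c.re * Real.exp 1 * t) * frobNorm Z := by
  set U := hGx.1.eigenvectorUnitary
  set V := hGy.1.eigenvectorUnitary
  set W : Matrix (Fin n) (Fin m) ℂ :=
    star (U : Matrix (Fin n) (Fin n) ℂ) * Z * (V : Matrix (Fin m) (Fin m) ℂ)
  have hK : 0 ≤ ‖c‖ / (-c.re * Real.exp 1 * t) := by
    have : 0 < -c.re := neg_pos.mpr hc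
    positivity
  rw [← frobNorm_unitary_mul_mul_unitary (Unitary.star_mem U.2) V.2,
    star_mul_sylvester_mul_eq U.2 V.2, hGx.1.star_eigenvectorUnitary_mul_exp_smul_mul,
    hGy.1.star_eigenvectorUnitary_mul_exp_smul_mul, hGx.1.star_eigenvectorUnitary_mul_smul_mul,
    hGy.1.star_eigenvectorUnitary_mul_smul_mul,
    ← frobNorm_unitary_mul_mul_unitary (Unitary.star_mem U.2) V.2 Z]
  refine frobNorm_le_of_norm_apply_le hK fun i j => ?_
  have hs : 0 ≤ hGx.1.eigenvalues i + hGy.1.eigenvalues j :=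
    add_nonneg (hGx.eigenvalues_nonneg i) (hGy.eigenvalues_nonneg j)
  have hentry : Complex.exp (t * c * hGx.1.eigenvalues i) *
        (c * hGx.1.eigenvalues i + c * hGy.1.eigenvalues j) *
        Complex.exp (t * c * hGy.1.eigenvalues j) * W i j =
      c * ↑(hGx.1.eigenvalues i + hGy.1.eigenvalues j) *
        Complex.exp (t * c * ↑(hGx.1.eigenvalues i + hGy.1.eigenvalues j)) * W i j := by
    push_cast
    rw [mul_add (t * c : ℂ), Complex.exp_add]
    ring
  rw [diagonal_mul_sylvester_mul_diagonal_apply, hentry, norm_mul]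
  gcongr
  exact norm_mul_mul_exp_le hc hs ht

theorem stmt_1 {n m : ℕ} (ν η : ℝ) (hν : 0 < ν)
    (Gx : Matrix (Fin n) (Fin n) ℂ) (Gy : Matrix (Fin m) (Fin m) ℂ)
    (hGx : Gx.PosSemidef) (hGy : Gy.PosSemidef)
    (Ax : Matrix (Fin n) (Fin n) ℂ) (Ay : Matrix (Fin m) (Fin m) ℂ)
    (hAx : Ax = (-((ν : ℂ) + (η : ℂ) * Complex.I)) • Gx)
    (hAy : Ay = (-((ν : ℂ) + (η : ℂ) * Complex.I)) • Gy)
    (t : ℝ) (ht : 0 < t) (Z : Matrix (Fin n) (Fin m) ℂ) :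
    frobNorm (NormedSpace.exp (t • Ax) * (Ax * Z + Z * Ay) * NormedSpace.exp (t • Ay)) ≤
      Real.sqrt (ν ^ 2 + η ^ 2) / (ν * Real.exp 1 * t) * frobNorm Z := by
  set c : ℂ := -((ν : ℂ) + (η : ℂ) * Complex.I)
  have hc_re : c.re = -ν := by simp [c]
  have hc_norm : ‖c‖ = Real.sqrt (ν ^ 2 + η ^ 2) := by
    rw [norm_neg, Complex.norm_def, Complex.normSq_apply]
    simp [pow_two]
  have hsmul {k : ℕ} (G : Matrix (Fin k) (Fin k) ℂ) : t • c • G = ((t : ℂ) * c) • G := by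
    rw [← Complex.real_smul, smul_assoc]
  subst hAx hAy
  rw [hsmul, hsmul, ← hc_norm, ← neg_neg ν, ← hc_re]
  exact frobNorm_exp_mul_sylvester_mul_exp_le hGx hGy (by rw [hc_re]; linarith) ht Z
end

section
/- Let κ, ξ, γ be real numbers, define the entrywise nonlinearity G on complex n×m matrices by G(U)_{ij} = −(κ + iξ)|U_{ij}|² U_{ij} + γ U_{ij}, and set L = 3√(κ² + ξ²) δ² + |γ| for some δ ≥ 0. Suppose u, v : [0, τ] → ℂ^{n×m} are differentiable with u'(t) = G(u(t)) and v'(t) = G(v(t)) for all t ∈ [0, τ], and all entries of u(t) and v(t) have modulus at most δ for all t ∈ [0, τ]. Then for every t ∈ [0, τ], ‖u(t) − v(t)‖_F ≤ e^{L t} ‖u(0) − v(0)‖_F. -/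
open scoped BigOperators

attribute [local instance] Matrix.frobeniusNormedAddCommGroup Matrix.frobeniusNormedSpace

/-- The entrywise nonlinearity `G(U)_{ij} = -(κ + iξ)|U_{ij}|² U_{ij} + γ U_{ij}`. -/
noncomputable def Gnl (κ ξ γ : ℝ) {n m : ℕ} (U : Matrix (Fin n) (Fin m) ℂ) :
    Matrix (Fin n) (Fin m) ℂ :=
  Matrix.of fun i j =>
    -((κ : ℂ) + (ξ : ℂ) * Complex.I) * ↑(‖U i j‖ ^ 2) * U i j + (γ : ℂ) * U i j

/-!
Along `[0, τ]` both trajectories stay in the box `{U | ∀ i j, ‖U i j‖ ≤ δ}`, on which `G` is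
Lipschitz for the Frobenius norm with constant `L`: the cubic term satisfies
`|a|²a - |b|²b = |a|²(a - b) + (|a| - |b|)(|a| + |b|) b`, hence is `3δ²`-Lipschitz entrywise,
and entrywise Lipschitz bounds pass to the Frobenius norm. Grönwall's inequality for two
solutions of an ODE with a vector field that is Lipschitz on a set containing them then gives
the exponential bound.
-/

namespace Matrix

variable {m n α β : Type*} [Fintype m] [Fintype n]
  [NormedAddCommGroup α] [NormedAddCommGroup β]

theorem frobenius_norm_sq (A : Matrix m n α) : ‖A‖ ^ 2 = ∑ i, ∑ j, ‖A i j‖ ^ 2 := by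
  rw [frobenius_norm_def, ← Real.rpow_natCast, ← Real.rpow_mul (by positivity)]
  norm_num

theorem frobenius_norm_le_mul_of_forall_le {A : Matrix m n α} {B : Matrix m n β} {c : ℝ}
    (hc : 0 ≤ c) (h : ∀ i j, ‖A i j‖ ≤ c * ‖B i j‖) : ‖A‖ ≤ c * ‖B‖ := by
  refine (pow_le_pow_iff_left₀ (norm_nonneg _) (by positivity) two_ne_zero).mp ?_
  rw [mul_pow, frobenius_norm_sq, frobenius_norm_sq, Finset.mul_sum]
  refine Finset.sum_le_sum fun i _ => ?_
  rw [Finset.mul_sum]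
  refine Finset.sum_le_sum fun j _ => ?_
  rw [← mul_pow]
  exact pow_le_pow_left₀ (norm_nonneg _) (h i j) 2

end Matrix

theorem frobNorm_eq_norm {n m : ℕ} (Z : Matrix (Fin n) (Fin m) ℂ) : frobNorm Z = ‖Z‖ := by
  rw [frobNorm, ← Matrix.frobenius_norm_sq, Real.sqrt_sq (norm_nonneg _)]

theorem norm_sq_smul_sub_norm_sq_smul_le {E : Type*} [NormedAddCommGroup E] [NormedSpace ℝ E]
    {δ : ℝ} {a b : E} (ha : ‖a‖ ≤ δ) (hb : ‖b‖ ≤ δ) :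
    ‖‖a‖ ^ 2 • a - ‖b‖ ^ 2 • b‖ ≤ 3 * δ ^ 2 * ‖a - b‖ := by
  have hsq : |‖a‖ ^ 2 - ‖b‖ ^ 2| ≤ 2 * δ * ‖a - b‖ := by
    rw [sq_sub_sq, abs_mul, abs_of_nonneg (by positivity)]
    exact mul_le_mul (by linarith) (abs_norm_sub_norm_le a b) (abs_nonneg _)
      (by linarith [norm_nonneg a])
  calc ‖‖a‖ ^ 2 • a - ‖b‖ ^ 2 • b‖
      = ‖‖a‖ ^ 2 • (a - b) + (‖a‖ ^ 2 - ‖b‖ ^ 2) • b‖ := by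
        rw [smul_sub, sub_smul]; abel_nf
    _ ≤ ‖a‖ ^ 2 * ‖a - b‖ + |‖a‖ ^ 2 - ‖b‖ ^ 2| * ‖b‖ := by
        refine (norm_add_le _ _).trans_eq ?_
        rw [norm_smul, norm_smul, Real.norm_eq_abs, Real.norm_eq_abs, abs_of_nonneg (by positivity)]
    _ ≤ δ ^ 2 * ‖a - b‖ + (2 * δ * ‖a - b‖) * δ := by
        gcongr
        exact (abs_nonneg _).trans hsq
    _ = 3 * δ ^ 2 * ‖a - b‖ := by ring

theorem Gnl_lipschitzOnWith (κ ξ γ δ : ℝ) {n m : ℕ} :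
    LipschitzOnWith (3 * Real.sqrt (κ ^ 2 + ξ ^ 2) * δ ^ 2 + |γ|).toNNReal
      (Gnl κ ξ γ (n := n) (m := m)) {U | ∀ i j, ‖U i j‖ ≤ δ} := by
  have hL : 0 ≤ 3 * Real.sqrt (κ ^ 2 + ξ ^ 2) * δ ^ 2 + |γ| := by positivity
  refine LipschitzOnWith.of_dist_le_mul fun U hU V hV => ?_
  rw [Real.coe_toNNReal _ hL, dist_eq_norm, dist_eq_norm]
  refine Matrix.frobenius_norm_le_mul_of_forall_le hL fun i j => ?_
  set a := U i j
  set b := V i j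
  have hcubic : ‖(‖a‖ ^ 2 : ℝ) • a - (‖b‖ ^ 2 : ℝ) • b‖ ≤ 3 * δ ^ 2 * ‖a - b‖ :=
    norm_sq_smul_sub_norm_sq_smul_le (hU i j) (hV i j)
  have hsplit : (Gnl κ ξ γ U - Gnl κ ξ γ V) i j
      = -((κ : ℂ) + ξ * Complex.I) * ((‖a‖ ^ 2 : ℝ) • a - (‖b‖ ^ 2 : ℝ) • b) + γ * (a - b) := by
    simp only [Gnl, Matrix.sub_apply, Matrix.of_apply, Complex.real_smul]
    ring
  calc ‖(Gnl κ ξ γ U - Gnl κ ξ γ V) i j‖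
      ≤ Real.sqrt (κ ^ 2 + ξ ^ 2) * ‖(‖a‖ ^ 2 : ℝ) • a - (‖b‖ ^ 2 : ℝ) • b‖ + |γ| * ‖a - b‖ := by
        rw [hsplit]
        refine (norm_add_le _ _).trans_eq ?_
        rw [norm_mul, norm_mul, norm_neg, Complex.norm_add_mul_I, Complex.norm_real,
          Real.norm_eq_abs]
    _ ≤ Real.sqrt (κ ^ 2 + ξ ^ 2) * (3 * δ ^ 2 * ‖a - b‖) + |γ| * ‖a - b‖ := by gcongr
    _ = (3 * Real.sqrt (κ ^ 2 + ξ ^ 2) * δ ^ 2 + |γ|) * ‖(U - V) i j‖ := by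
        rw [Matrix.sub_apply]; ring

theorem stmt_9_general {n m : ℕ} (κ ξ γ δ τ : ℝ)
    (L : ℝ) (hL : L = 3 * Real.sqrt (κ ^ 2 + ξ ^ 2) * δ ^ 2 + |γ|)
    (u v : ℝ → Matrix (Fin n) (Fin m) ℂ)
    (hu : ∀ t ∈ Set.Icc (0 : ℝ) τ, HasDerivAt u (Gnl κ ξ γ (u t)) t)
    (hv : ∀ t ∈ Set.Icc (0 : ℝ) τ, HasDerivAt v (Gnl κ ξ γ (v t)) t)
    (hub : ∀ t ∈ Set.Icc (0 : ℝ) τ, ∀ i j, ‖u t i j‖ ≤ δ)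
    (hvb : ∀ t ∈ Set.Icc (0 : ℝ) τ, ∀ i j, ‖v t i j‖ ≤ δ) :
    ∀ t ∈ Set.Icc (0 : ℝ) τ,
      frobNorm (u t - v t) ≤ Real.exp (L * t) * frobNorm (u 0 - v 0) := by
  intro t ht
  have hIco : Set.Ico (0 : ℝ) τ ⊆ Set.Icc 0 τ := Set.Ico_subset_Icc_self
  have hgronwall := dist_le_of_trajectories_ODE_of_mem (v := fun _ => Gnl κ ξ γ)
    (fun _ _ => Gnl_lipschitzOnWith κ ξ γ δ)
    (fun s hs => (hu s hs).continuousAt.continuousWithinAt)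
    (fun s hs => (hu s (hIco hs)).hasDerivWithinAt) (fun s hs => hub s (hIco hs))
    (fun s hs => (hv s hs).continuousAt.continuousWithinAt)
    (fun s hs => (hv s (hIco hs)).hasDerivWithinAt) (fun s hs => hvb s (hIco hs))
    le_rfl t ht
  rw [Real.coe_toNNReal _ (by positivity), ← hL, sub_zero, dist_eq_norm, dist_eq_norm] at hgronwall
  rw [frobNorm_eq_norm, frobNorm_eq_norm, mul_comm]
  exact hgronwall

theorem stmt_9 {n m : ℕ} (κ ξ γ δ τ : ℝ) (hδ : 0 ≤ δ) (hτ : 0 ≤ τ)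
    (L : ℝ) (hL : L = 3 * Real.sqrt (κ ^ 2 + ξ ^ 2) * δ ^ 2 + |γ|)
    (u v : ℝ → Matrix (Fin n) (Fin m) ℂ)
    (hu : ∀ t ∈ Set.Icc (0 : ℝ) τ, HasDerivAt u (Gnl κ ξ γ (u t)) t)
    (hv : ∀ t ∈ Set.Icc (0 : ℝ) τ, HasDerivAt v (Gnl κ ξ γ (v t)) t)
    (hub : ∀ t ∈ Set.Icc (0 : ℝ) τ, ∀ i j, ‖u t i j‖ ≤ δ)
    (hvb : ∀ t ∈ Set.Icc (0 : ℝ) τ, ∀ i j, ‖v t i j‖ ≤ δ) :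
    ∀ t ∈ Set.Icc (0 : ℝ) τ,
      frobNorm (u t - v t) ≤ Real.exp (L * t) * frobNorm (u 0 - v 0) :=
  stmt_9_general κ ξ γ δ τ L hL u v hu hv hub hvb
end

section
/- Let κ > 0 and γ, ξ ∈ ℝ, and let u : [0, ∞) → ℂ be differentiable with u'(t) = −(κ + iξ)|u(t)|² u(t) + γ u(t) for all t ≥ 0. Then for every t ≥ 0, |u(t)|² ≤ max(|u(0)|², γ/κ). -/
/-!
Along the flow, `f = |u|²` satisfies `f' = 2 f (γ - κ f)`, so `f' ≤ 0` wherever `f ≥ γ / κ`.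
Hence `f` can never rise above the level `max (f 0) (γ / κ)`: a barrier argument against the
lines `M + r t` with arbitrarily small slope `r > 0`.
-/

open Set

theorem image_le_of_deriv_right_nonpos_of_le {f f' : ℝ → ℝ} {a b M : ℝ}
    (hf : ContinuousOn f (Icc a b)) (hf' : ∀ x ∈ Ico a b, HasDerivWithinAt f (f' x) (Ici x) x)
    (ha : f a ≤ M) (bound : ∀ x ∈ Ico a b, M ≤ f x → f' x ≤ 0) :
    ∀ ⦃x⦄, x ∈ Icc a b → f x ≤ M := by
  have fence : ∀ r > 0, ∀ ⦃x⦄, x ∈ Icc a b → f x ≤ M + r * (x - a) := by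
    intro r hr
    refine image_le_of_deriv_right_lt_deriv_boundary hf hf' (by simpa using ha)
      (B' := fun _ => r) (fun x => by simpa using ((hasDerivAt_id x).sub_const a).const_mul r)
      fun x hx hfx => (bound x hx ?_).trans_lt hr
    nlinarith [hx.1]
  intro x hx
  have : ContinuousWithinAt (fun r => M + r * (x - a)) (Ioi 0) 0 := by fun_prop
  simpa using continuousWithinAt_const.closure_le (by simp) this fun r hr => fence r hr hx

theorem HasDerivAt.norm_sq_of_cubic_field {u : ℝ → ℂ} {c : ℂ} {γ t : ℝ}
    (hu : HasDerivAt u (-c * ↑(‖u t‖ ^ 2) * u t + (γ : ℂ) * u t) t) :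
    HasDerivAt (‖u ·‖ ^ 2) (2 * ‖u t‖ ^ 2 * (γ - c.re * ‖u t‖ ^ 2)) t := by
  convert hu.norm_sq using 1
  rw [Complex.inner, ← Complex.normSq_eq_norm_sq]
  simp only [Complex.add_re, Complex.add_im, Complex.mul_re, Complex.mul_im, Complex.neg_re,
    Complex.neg_im, Complex.ofReal_re, Complex.ofReal_im, Complex.conj_re, Complex.conj_im, Complex.normSq_apply]
  ring

theorem stmt_12 (κ γ ξ : ℝ) (hκ : 0 < κ) (u : ℝ → ℂ)
    (hu : ∀ t : ℝ, 0 ≤ t → HasDerivAt u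
      (-((κ : ℂ) + (ξ : ℂ) * Complex.I) * ↑(‖u t‖ ^ 2) * u t + (γ : ℂ) * u t) t) :
    ∀ t : ℝ, 0 ≤ t → ‖u t‖ ^ 2 ≤ max (‖u 0‖ ^ 2) (γ / κ) := by
  intro t ht
  have hderiv : ∀ s, 0 ≤ s → HasDerivAt (‖u ·‖ ^ 2) (2 * ‖u s‖ ^ 2 * (γ - κ * ‖u s‖ ^ 2)) s :=
    fun s hs => by simpa using (hu s hs).norm_sq_of_cubic_field
  have hγ : γ ≤ κ * max (‖u 0‖ ^ 2) (γ / κ) :=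
    (div_le_iff₀' hκ).1 (le_max_right _ _)
  refine image_le_of_deriv_right_nonpos_of_le
    (fun s hs => (hderiv s hs.1).continuousAt.continuousWithinAt)
    (fun s hs => (hderiv s hs.1).hasDerivWithinAt) (le_max_left _ _) ?_ ⟨ht, le_rfl⟩
  intro s _ hs
  have : γ - κ * ‖u s‖ ^ 2 ≤ 0 := by nlinarith
  exact mul_nonpos_of_nonneg_of_nonpos (by positivity) this
end

section
/- Let S be a complex n×r matrix with S*S = I_r, V a complex m×r matrix with V*V = I_r, and Σ an arbitrary complex r×r matrix; set X = S Σ V*. Define P(Z) = S S* Z − S S* Z V V* + Z V V* on complex n×m matrices. Then for any n×n complex matrix A_x and any m×m complex matrix A_y, P(A_x X + X A_y) = A_x X + X A_y; in particular also P(X) = X. -/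
open Matrix

theorem stmt_14 {n m r : ℕ} (S : Matrix (Fin n) (Fin r) ℂ) (V : Matrix (Fin m) (Fin r) ℂ)
    (hS : Sᴴ * S = 1) (hV : Vᴴ * V = 1)
    (Sg : Matrix (Fin r) (Fin r) ℂ)
    (X : Matrix (Fin n) (Fin m) ℂ) (hX : X = S * Sg * Vᴴ)
    (P : Matrix (Fin n) (Fin m) ℂ → Matrix (Fin n) (Fin m) ℂ)
    (hP : ∀ Z, P Z = S * Sᴴ * Z - S * Sᴴ * Z * (V * Vᴴ) + Z * (V * Vᴴ))
    (Ax : Matrix (Fin n) (Fin n) ℂ) (Ay : Matrix (Fin m) (Fin m) ℂ) :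
    P (Ax * X + X * Ay) = Ax * X + X * Ay ∧ P X = X := by
  have h1 : X * (V * Vᴴ) = X := by
    rw [hX]
    calc S * Sg * Vᴴ * (V * Vᴴ) = S * Sg * ((Vᴴ * V) * Vᴴ) := by
          simp only [Matrix.mul_assoc]
      _ = S * Sg * Vᴴ := by rw [hV, Matrix.one_mul]
  have h2 : S * Sᴴ * X = X := by
    rw [hX]
    calc S * Sᴴ * (S * Sg * Vᴴ) = S * ((Sᴴ * S) * (Sg * Vᴴ)) := by
          simp only [Matrix.mul_assoc]
      _ = S * Sg * Vᴴ := by rw [hS, Matrix.one_mul, Matrix.mul_assoc]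
  constructor
  · rw [hP]
    have e1 : Ax * X * (V * Vᴴ) = Ax * X := by
      rw [Matrix.mul_assoc, h1]
    have e2 : S * Sᴴ * (X * Ay) = X * Ay := by
      rw [← Matrix.mul_assoc, h2]
    rw [Matrix.add_mul, Matrix.mul_add, Matrix.add_mul, e1, e2]
    have e3 : S * Sᴴ * (Ax * X) * (V * Vᴴ) = S * Sᴴ * (Ax * X) := by
      simp only [Matrix.mul_assoc]
      rw [h1]
    rw [e3]
    abel
  · rw [hP, h2, h1]
    abel
end

section
/- For 1 < α < 2, define for k ∈ ℤ the fractional centered difference coefficients g_k^α = (−1)^k Γ(1+α) / (Γ(α/2 − k + 1) Γ(α/2 + k + 1)). Then g_0^α > 0, and g_k^α < 0 for every integer k ≠ 0. -/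
/-- The fractional centered difference coefficients
`g_k^α = (−1)^k Γ(1+α) / (Γ(α/2 − k + 1) Γ(α/2 + k + 1))`. -/
noncomputable def gcoef (α : ℝ) (k : ℤ) : ℝ :=
  (-1 : ℝ) ^ k * Real.Gamma (1 + α) /
    (Real.Gamma (α / 2 - (k : ℝ) + 1) * Real.Gamma (α / 2 + (k : ℝ) + 1))

open Real in
lemma gcoef_neg_of_pos (α : ℝ) (hα₁ : 1 < α) (hα₂ : α < 2) (k : ℤ) (hk : 1 ≤ k) :
    gcoef α k < 0 := by
  have hk' : (1 : ℝ) ≤ (k : ℝ) := by exact_mod_cast hk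
  have hs0 : 0 < Real.sin (π * (α / 2)) := by
    apply Real.sin_pos_of_pos_of_lt_pi <;> nlinarith [Real.pi_pos]
  have hB : 0 < Real.Gamma ((k : ℝ) - α / 2) := Real.Gamma_pos_of_pos (by linarith)
  have hC : 0 < Real.Gamma (α / 2 + (k : ℝ) + 1) := Real.Gamma_pos_of_pos (by linarith)
  have hG : 0 < Real.Gamma (1 + α) := Real.Gamma_pos_of_pos (by linarith)
  have hsin : Real.sin (π * (α / 2 - (k : ℝ) + 1)) =
      -((-1 : ℝ) ^ k * Real.sin (π * (α / 2))) := by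
    have h1 : π * (α / 2 - (k : ℝ) + 1) = (π * (α / 2) + π) - (k : ℤ) * π := by
      push_cast; ring
    rw [h1, Real.sin_sub_int_mul_pi, Real.sin_add_pi]
    ring
  have hx := Real.Gamma_mul_Gamma_one_sub (α / 2 - (k : ℝ) + 1)
  rw [show (1 : ℝ) - (α / 2 - (k : ℝ) + 1) = (k : ℝ) - α / 2 by ring, hsin] at hx
  have he : ((-1 : ℝ) ^ k) * ((-1 : ℝ) ^ k) = 1 := by
    rw [← zpow_add₀ (by norm_num : (-1 : ℝ) ≠ 0)]
    exact Even.neg_one_zpow ⟨k, rfl⟩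
  have hek : ((-1 : ℝ) ^ k) ≠ 0 := by
    intro h; rw [h, mul_zero] at he; norm_num at he
  have hA : Real.Gamma (α / 2 - (k : ℝ) + 1) =
      -(π / ((-1 : ℝ) ^ k * Real.sin (π * (α / 2)) * Real.Gamma ((k : ℝ) - α / 2))) := by
    rw [eq_div_of_mul_eq hB.ne' hx, div_div, neg_mul, div_neg]
  have key : gcoef α k =
      -(Real.Gamma (1 + α) * Real.sin (π * (α / 2)) * Real.Gamma ((k : ℝ) - α / 2)) /
        (π * Real.Gamma (α / 2 + (k : ℝ) + 1)) := by
    rw [gcoef, hA]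
    field_simp
    ring_nf
    rw [show ((-1:ℝ)^k)^2 = 1 by rw [sq]; exact he]
    ring
  rw [key]
  apply div_neg_of_neg_of_pos
  · nlinarith [mul_pos (mul_pos hG hs0) hB]
  · positivity

theorem stmt_15 (α : ℝ) (hα₁ : 1 < α) (hα₂ : α < 2) :
    0 < gcoef α 0 ∧ ∀ k : ℤ, k ≠ 0 → gcoef α k < 0 := by
  have hsymm : ∀ k : ℤ, gcoef α (-k) = gcoef α k := by
    intro k
    have he : ((-1 : ℝ) ^ (-k)) = (-1 : ℝ) ^ k := by
      rw [zpow_neg]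
      refine inv_eq_of_mul_eq_one_left ?_
      rw [← zpow_add₀ (by norm_num : (-1 : ℝ) ≠ 0)]
      exact Even.neg_one_zpow ⟨k, rfl⟩
    unfold gcoef
    rw [he]
    push_cast
    rw [show α / 2 - -(k : ℝ) + 1 = α / 2 + (k : ℝ) + 1 by ring,
      show α / 2 + -(k : ℝ) + 1 = α / 2 - (k : ℝ) + 1 by ring]
    ring
  constructor
  · have h0 : 0 < Real.Gamma (α / 2 + 1) := Real.Gamma_pos_of_pos (by linarith)
    have hG : 0 < Real.Gamma (1 + α) := Real.Gamma_pos_of_pos (by linarith)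
    unfold gcoef
    push_cast
    rw [show α / 2 - 0 + 1 = α / 2 + 1 by ring, show α / 2 + 0 + 1 = α / 2 + 1 by ring]
    simp only [zpow_zero, one_mul]
    positivity
  · intro k hk
    rcases lt_or_gt_of_ne hk with h | h
    · rw [← neg_neg k, hsymm (-k)]
      exact gcoef_neg_of_pos α hα₁ hα₂ (-k) (by omega)
    · exact gcoef_neg_of_pos α hα₁ hα₂ k h
end

section
/- For 1 < α < 2, define for k ∈ ℤ the fractional centered difference coefficients g_k^α = (−1)^k Γ(1+α) / (Γ(α/2 − k + 1) Γ(α/2 + k + 1)). Then the family (g_k^α)_{k ∈ ℤ} is summable with sum 0, i.e., HasSum (fun k : ℤ => g_k^α) 0. -/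
open Real Filter Topology

theorem gcoef_neg (α : ℝ) (k : ℤ) : gcoef α (-k) = gcoef α k := by
  simp only [gcoef, zpow_neg, Int.cast_neg, sub_neg_eq_add, ← sub_eq_add_neg, ← inv_zpow,
    inv_neg, inv_one]
  ring

theorem Gamma_sub_natCast_mul_Gamma_natCast_add_one_sub (a : ℝ) (n : ℕ) :
    Gamma (a - n) * Gamma (n + 1 - a) = (-1) ^ n * π / sin (π * a) := by
  have hsin : sin (π * (a - n)) = (-1) ^ n * sin (π * a) := by
    rw [mul_sub, mul_comm π (n : ℝ), sin_sub_nat_mul_pi]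
  have := Gamma_mul_Gamma_one_sub (a - n)
  rw [show (n : ℝ) + 1 - a = 1 - (a - n) by ring, this, hsin]
  rcases neg_one_pow_eq_or ℝ n with h | h <;> rw [h] <;> ring

noncomputable def gammaRatio (a x : ℝ) : ℝ := Gamma (x - a) / Gamma (x + a)

theorem gammaRatio_sub_gammaRatio_add_one {a x : ℝ} (h₁ : 0 < x - a) (h₂ : 0 < x + a) :
    gammaRatio a x - gammaRatio a (x + 1) = 2 * a * (Gamma (x - a) / Gamma (x + 1 + a)) := by
  have hsub : Gamma (x + 1 - a) = (x - a) * Gamma (x - a) := by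
    rw [← Gamma_add_one h₁.ne']; ring_nf
  have hadd : Gamma (x + 1 + a) = (x + a) * Gamma (x + a) := by
    rw [← Gamma_add_one h₂.ne']; ring_nf
  have := (Gamma_pos_of_pos h₂).ne'
  rw [gammaRatio, gammaRatio, hsub, hadd]
  field_simp
  ring

/-- The Bohr–Mollerup bounds `Γ(n + 2 - a) ≤ Γ(n + 1) (n + 1) ^ (1 - a)` and
`Γ(n + 2) (n + 1) ^ a ≤ Γ(n + 2 + a)`, taken in logarithms. -/
theorem gammaRatio_natCast_add_two_le {a : ℝ} (ha₀ : 0 < a) (ha₁ : a < 1) (n : ℕ) :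
    gammaRatio a (n + 2) ≤ (n + 1) ^ (-(2 * a)) := by
  have hfeq : ∀ {y : ℝ}, 0 < y → (log ∘ Gamma) (y + 1) = (log ∘ Gamma) y + log y := by
    intro y hy
    simp only [Function.comp, Gamma_add_one hy.ne']
    rw [log_mul hy.ne' (Gamma_pos_of_pos hy).ne', add_comm]
  have upper := BohrMollerup.f_add_nat_le convexOn_log_Gamma hfeq (n := n + 1) (x := 1 - a)
    n.succ_ne_zero (by linarith) (by linarith)
  have lower := BohrMollerup.f_add_nat_ge convexOn_log_Gamma hfeq (n := n + 2) (x := a)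
    (by omega) ha₀
  have hn : (0 : ℝ) < n + 1 := by positivity
  have step := hfeq hn
  push_cast at upper lower step
  simp only [Function.comp] at upper lower step
  rw [show (n : ℝ) + 2 - 1 = n + 1 by ring] at lower
  rw [show (n : ℝ) + 1 + 1 = n + 2 by ring] at step
  rw [gammaRatio, ← exp_log (Gamma_pos_of_pos (by linarith : (0:ℝ) < n + 2 - a)),
    ← exp_log (Gamma_pos_of_pos (by linarith : (0:ℝ) < n + 2 + a)), ← exp_sub,
    rpow_def_of_pos hn]
  gcongr
  rw [show (n : ℝ) + 2 - a = n + 1 + (1 - a) by ring]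
  nlinarith

theorem tendsto_gammaRatio_natCast_atTop {a : ℝ} (ha₀ : 0 < a) (ha₁ : a < 1) :
    Tendsto (fun n : ℕ => gammaRatio a n) atTop (𝓝 0) := by
  rw [← tendsto_add_atTop_iff_nat 2]
  have hbound : Tendsto (fun n : ℕ => ((n : ℝ) + 1) ^ (-(2 * a))) atTop (𝓝 0) :=
    (tendsto_rpow_neg_atTop (by linarith)).comp
      (tendsto_natCast_atTop_atTop.atTop_add tendsto_const_nhds)
  refine squeeze_zero (fun n => ?_) (fun n => ?_) hbound
  · exact div_nonneg (Gamma_pos_of_pos (by push_cast; linarith)).le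
      (Gamma_pos_of_pos (by push_cast; linarith)).le
  · exact_mod_cast gammaRatio_natCast_add_two_le ha₀ ha₁ n

theorem Antitone.hasSum_sub_add_one {f : ℕ → ℝ} (hf : Antitone f) {l : ℝ}
    (hl : Tendsto f atTop (𝓝 l)) : HasSum (fun n => f n - f (n + 1)) (f 0 - l) := by
  refine (hasSum_iff_tendsto_nat_of_nonneg (fun n => sub_nonneg.2 (hf n.le_succ)) _).2 ?_
  simp only [Finset.sum_range_sub']
  exact tendsto_const_nhds.sub hl

theorem gcoef_natCast_add_one {α : ℝ} (hα₀ : 0 < α) (hα₂ : α < 2) (n : ℕ) :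
    gcoef α (n + 1) = -(Gamma (1 + α) * sin (π * (α / 2)) / (π * α)) *
      (gammaRatio (α / 2) (n + 1) - gammaRatio (α / 2) (n + 1 + 1)) := by
  have hrefl := Gamma_sub_natCast_mul_Gamma_natCast_add_one_sub (α / 2) n
  rw [gammaRatio_sub_gammaRatio_add_one (by linarith) (by linarith), gcoef]
  push_cast
  rw [show α / 2 - (n + 1) + 1 = α / 2 - n by ring,
    show α / 2 + (n + 1) + 1 = n + 1 + 1 + α / 2 by ring, zpow_add_one₀ (by norm_num), zpow_natCast]
  have h1 : 0 < Gamma (n + 1 - α / 2) := Gamma_pos_of_pos (by linarith)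
  rw [← eq_div_iff h1.ne'] at hrefl
  rw [hrefl]
  field_simp

theorem gcoef_zero_eq_mul_gammaRatio_one {α : ℝ} (hα₀ : 0 < α) (hα₂ : α < 2) :
    gcoef α 0 = 2 * (Gamma (1 + α) * sin (π * (α / 2)) / (π * α)) * gammaRatio (α / 2) 1 := by
  have hrefl := Gamma_mul_Gamma_one_sub (α / 2)
  have hGa : Gamma (α / 2 + 1) = α / 2 * Gamma (α / 2) := Gamma_add_one (by positivity)
  have := (Gamma_pos_of_pos (by positivity : 0 < α / 2)).ne'
  have := (Gamma_pos_of_pos (by linarith : 0 < 1 - α / 2)).ne'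
  have hs : 0 < sin (π * (α / 2)) := sin_pos_of_pos_of_lt_pi (by positivity) (by nlinarith [pi_pos])
  rw [eq_div_iff hs.ne'] at hrefl
  simp only [gcoef, gammaRatio, Int.cast_zero, zpow_zero, sub_zero, add_zero, one_mul,
    add_comm 1 (α / 2), hGa]
  field_simp
  rw [show α * π / 2 = π * (α / 2) by ring, show (2 - α) / 2 = 1 - α / 2 by ring]
  linear_combination -hrefl

theorem hasSum_gcoef_natCast_add_one {α : ℝ} (hα₀ : 0 < α) (hα₂ : α < 2) :
    HasSum (fun n : ℕ => gcoef α (n + 1)) (-(gcoef α 0 / 2)) := by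
  have ha₀ : 0 < α / 2 := by positivity
  have ha₁ : α / 2 < 1 := by linarith
  have hanti : Antitone fun n : ℕ => gammaRatio (α / 2) (n + 1) := by
    refine antitone_nat_of_succ_le fun n => sub_nonneg.1 ?_
    push_cast
    rw [gammaRatio_sub_gammaRatio_add_one (by linarith) (by linarith)]
    exact mul_nonneg (by positivity) (div_nonneg (Gamma_pos_of_pos (by linarith)).le
      (Gamma_pos_of_pos (by positivity)).le)
  have hlim : Tendsto (fun n : ℕ => gammaRatio (α / 2) (n + 1)) atTop (𝓝 0) := by
    simpa using (tendsto_add_atTop_iff_nat 1).2 (tendsto_gammaRatio_natCast_atTop ha₀ ha₁)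
  have hsum := (hanti.hasSum_sub_add_one hlim).mul_left
    (-(Gamma (1 + α) * sin (π * (α / 2)) / (π * α)))
  simp only [Nat.cast_zero, Nat.cast_add, Nat.cast_one, zero_add, sub_zero,
    ← gcoef_natCast_add_one hα₀ hα₂] at hsum
  rwa [gcoef_zero_eq_mul_gammaRatio_one hα₀ hα₂, mul_assoc, mul_div_cancel_left₀ _ two_ne_zero,
    ← neg_mul]

theorem stmt_16 (α : ℝ) (hα₁ : 1 < α) (hα₂ : α < 2) :
    HasSum (fun k : ℤ => gcoef α k) 0 := by
  have hpos := hasSum_gcoef_natCast_add_one (by linarith) hα₂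
  have hneg : HasSum (fun n : ℕ => gcoef α (-(n + 1))) (-(gcoef α 0 / 2)) := by
    simpa only [gcoef_neg] using hpos
  convert hpos.of_add_one_of_neg_add_one hneg using 1
  ring
end

section
/- For 1 < α < 2, define for k ∈ ℤ the fractional centered difference coefficients g_k^α = (−1)^k Γ(1+α) / (Γ(α/2 − k + 1) Γ(α/2 + k + 1)). Then for every natural number n ≥ 1, g_0^α + 2 ∑_{k=1}^{n} g_k^α > 0. -/
open scoped BigOperators

lemma gamma_shift_ne_zero {β : ℝ} (h1 : 1/2 < β) (h2 : β < 1) (x : ℝ) (z : ℤ)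
    (hx : x = β + z) : Real.Gamma x ≠ 0 := by
  apply Real.Gamma_ne_zero
  intro m hm
  rw [hx] at hm
  have hw : ((-(m : ℤ) - z : ℤ) : ℝ) = β := by push_cast; linarith
  rcases le_or_gt (-(m : ℤ) - z) 0 with h | h
  · have : ((-(m : ℤ) - z : ℤ) : ℝ) ≤ 0 := by exact_mod_cast h
    linarith
  · have h1' : (1 : ℤ) ≤ -(m : ℤ) - z := h
    have : (1 : ℝ) ≤ ((-(m : ℤ) - z : ℤ) : ℝ) := by exact_mod_cast h1'
    linarith

lemma gamma_sign {β : ℝ} (h1 : 1/2 < β) (h2 : β < 1) :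
    ∀ n : ℕ, 0 < (-1 : ℝ) ^ n * Real.Gamma (β - n) := by
  intro n
  induction n with
  | zero => simpa using Real.Gamma_pos_of_pos (by linarith)
  | succ n ih =>
    have hne : β - (n : ℝ) - 1 ≠ 0 := by
      have := gamma_shift_ne_zero h1 h2 (β - (n : ℝ) - 1) (-(n : ℤ) - 1) (by push_cast; ring)
      intro h
      exact this (by rw [h, Real.Gamma_zero])
    have hrec : Real.Gamma (β - n) = (β - (n : ℝ) - 1) * Real.Gamma (β - (n : ℝ) - 1) := by
      have := Real.Gamma_add_one hne
      rw [show β - (n : ℝ) - 1 + 1 = β - n by ring] at this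
      exact this
    have hneg : β - (n : ℝ) - 1 < 0 := by
      have : (0 : ℝ) ≤ n := Nat.cast_nonneg n
      linarith
    have hcast : β - ((n : ℝ) + 1) = β - (n : ℝ) - 1 := by ring
    rw [pow_succ, Nat.cast_succ, hcast]
    rw [hrec] at ih
    nlinarith [ih]

lemma key_identity (α : ℝ) (hα₁ : 1 < α) (hα₂ : α < 2) (n : ℕ) :
    gcoef α 0 + 2 * ∑ k ∈ Finset.Icc 1 n, gcoef α (k : ℤ)
      = 2 * (-1) ^ n * Real.Gamma α /
        (Real.Gamma (α / 2 + n + 1) * Real.Gamma (α / 2 - n)) := by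
  have hb1 : 1/2 < α/2 := by linarith
  have hb2 : α/2 < 1 := by linarith
  have hG : ∀ (x : ℝ) (z : ℤ), x = α/2 + z → Real.Gamma x ≠ 0 :=
    fun x z hx => gamma_shift_ne_zero hb1 hb2 x z hx
  induction n with
  | zero =>
    simp only [Finset.Icc_self, Nat.cast_zero]
    rw [show Finset.Icc 1 0 = (∅ : Finset ℕ) by decide]
    simp only [Finset.sum_empty, mul_zero, add_zero]
    have h0 : gcoef α 0 = Real.Gamma (1 + α) / (Real.Gamma (α/2 + 1) * Real.Gamma (α/2 + 1)) := by
      unfold gcoef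
      norm_num
    rw [h0]
    have hA : Real.Gamma (1 + α) = α * Real.Gamma α := by
      rw [add_comm, Real.Gamma_add_one (by linarith)]
    have hB : Real.Gamma (α/2 + 1) = (α/2) * Real.Gamma (α/2) := by
      rw [Real.Gamma_add_one (by linarith)]
    have hg1 : Real.Gamma (α/2) ≠ 0 := hG _ 0 (by push_cast; ring)
    have hg2 : Real.Gamma (α/2 + 1) ≠ 0 := hG _ 1 (by push_cast; ring)
    rw [hA, hB]
    simp only [pow_zero, sub_zero, one_mul]
    field_simp
  | succ n ih =>
    rw [Finset.sum_Icc_succ_top (by omega : 1 ≤ n + 1), mul_add, ← add_assoc, ih]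
    have hg0 : gcoef α ((n + 1 : ℕ) : ℤ) = (-1 : ℝ) ^ (n + 1) * Real.Gamma (1 + α) /
        (Real.Gamma (α/2 - n) * Real.Gamma (α/2 + n + 2)) := by
      unfold gcoef
      rw [zpow_natCast]
      rw [show (((n+1:ℕ):ℤ):ℝ) = (n:ℝ)+1 by push_cast; ring]
      rw [show α/2 - ((n:ℝ)+1) + 1 = α/2 - n by ring,
          show α/2 + ((n:ℝ)+1) + 1 = α/2 + n + 2 by ring]
    rw [hg0]
    have hA : Real.Gamma (1 + α) = α * Real.Gamma α := by
      rw [add_comm, Real.Gamma_add_one (by linarith)]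
    have hB : Real.Gamma (α/2 + n + 2) = (α/2 + n + 1) * Real.Gamma (α/2 + n + 1) := by
      have := Real.Gamma_add_one (s := α/2 + n + 1) (by positivity)
      rw [show α/2 + (n:ℝ) + 1 + 1 = α/2 + n + 2 by ring] at this
      exact this
    have hC : Real.Gamma (α/2 - n) = (α/2 - n - 1) * Real.Gamma (α/2 - n - 1) := by
      have hne : α/2 - (n:ℝ) - 1 ≠ 0 := by
        intro h
        have h2 := hG (α/2 - (n:ℝ) - 1) (-(n:ℤ) - 1) (by push_cast; ring)
        exact h2 (by rw [h, Real.Gamma_zero])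
      have := Real.Gamma_add_one hne
      rw [show α/2 - (n:ℝ) - 1 + 1 = α/2 - n by ring] at this
      exact this
    have hg1 : Real.Gamma (α/2 + n + 1) ≠ 0 := hG _ ((n:ℤ) + 1) (by push_cast; ring)
    have hg2 : Real.Gamma (α/2 - n - 1) ≠ 0 := hG _ (-(n:ℤ) - 1) (by push_cast; ring)
    have hn1 : (α/2 + (n:ℝ) + 1) ≠ 0 := by positivity
    have hn2 : (α/2 - (n:ℝ) - 1) ≠ 0 := fun h => hg2 (by rw [h, Real.Gamma_zero])
    rw [hA, hB, hC]
    rw [show ((n+1:ℕ):ℝ) = (n:ℝ)+1 by push_cast; ring]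
    rw [show α/2 + ((n:ℝ)+1) + 1 = α/2 + n + 2 by ring,
        show α/2 - ((n:ℝ)+1) = α/2 - n - 1 by ring, hB]
    have hpn : ((-1:ℝ))^(n+1) = -(-1:ℝ)^n := by rw [pow_succ]; ring
    rw [hpn]
    set p : ℝ := (-1)^n with hp
    set G := Real.Gamma α with hGdef
    set B := Real.Gamma (α/2 + (n:ℝ) + 1) with hBdef
    set C := Real.Gamma (α/2 - (n:ℝ) - 1) with hCdef
    obtain ⟨a, ha⟩ : ∃ a : ℝ, a = α/2 + (n:ℝ) + 1 := ⟨_, rfl⟩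
    obtain ⟨b, hb⟩ : ∃ b : ℝ, b = α/2 - (n:ℝ) - 1 := ⟨_, rfl⟩
    have hab : α = a + b := by rw [ha, hb]; ring
    have ha0 : a ≠ 0 := ha ▸ hn1
    have hb0 : b ≠ 0 := hb ▸ hn2
    rw [← ha, ← hb, hab]
    field_simp
    ring

theorem stmt_17 (α : ℝ) (hα₁ : 1 < α) (hα₂ : α < 2) :
    ∀ n : ℕ, 1 ≤ n → 0 < gcoef α 0 + 2 * ∑ k ∈ Finset.Icc 1 n, gcoef α (k : ℤ) := by
  intro n _
  rw [key_identity α hα₁ hα₂ n]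
  have hb1 : 1/2 < α/2 := by linarith
  have hb2 : α/2 < 1 := by linarith
  have hP := gamma_sign hb1 hb2 n
  have hB : 0 < Real.Gamma (α/2 + n + 1) := Real.Gamma_pos_of_pos (by positivity)
  have hGa : 0 < Real.Gamma α := Real.Gamma_pos_of_pos (by linarith)
  rcases Nat.even_or_odd n with h | h
  · rw [h.neg_one_pow] at hP ⊢
    rw [one_mul] at hP
    positivity
  · rw [h.neg_one_pow] at hP ⊢
    have hC : Real.Gamma (α/2 - n) < 0 := by nlinarith
    apply div_pos_of_neg_of_neg
    · nlinarith
    · nlinarith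
end

section
/- For 1 < α < 2 and N ≥ 2, let T_α be the real symmetric (N−1)×(N−1) Toeplitz matrix with entries (T_α)_{ij} = g_{|i−j|}^α, where g_k^α = (−1)^k Γ(1+α) / (Γ(α/2 − k + 1) Γ(α/2 + k + 1)). Then T_α is positive definite. -/
/-!
The coefficients satisfy `g₀ > 0` and `g_k < 0` for `k ≥ 1`, and their partial sums telescope:
`g₀ + 2 ∑_{k=1}^M g_k = 2 (-1)^M Γ(α) / (Γ(α/2 - M) Γ(α/2 + M + 1))`, which is positive because
`Γ(α/2 - M)` has sign `(-1)^M`. So every row of `T_α` is strictly diagonally dominant with positive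
diagonal, and Gershgorin's circle theorem puts every eigenvalue of the symmetric matrix `T_α`
in `(0, ∞)`.
-/

open Finset Real
open scoped ComplexOrder

theorem Matrix.IsHermitian.posDef_of_sum_row_lt_diag {𝕜 n : Type*} [RCLike 𝕜] [Fintype n]
    [DecidableEq n] {A : Matrix n n 𝕜} (hA : A.IsHermitian)
    (h : ∀ k, ∑ j ∈ univ.erase k, ‖A k j‖ < RCLike.re (A k k)) : A.PosDef := by
  refine hA.posDef_iff_eigenvalues_pos.2 fun i => ?_
  have hμ : Module.End.HasEigenvalue (Matrix.toLin' A) (hA.eigenvalues i : 𝕜) := by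
    refine Module.End.hasEigenvalue_of_hasEigenvector (x := ⇑(hA.eigenvectorBasis i)) ⟨?_, ?_⟩
    · rw [Module.End.mem_eigenspace_iff, Matrix.toLin'_apply, hA.mulVec_eigenvectorBasis,
        RCLike.real_smul_eq_coe_smul (K := 𝕜)]
    · simpa using (hA.eigenvectorBasis).orthonormal.ne_zero i
  obtain ⟨k, hk⟩ := eigenvalue_mem_ball hμ
  rw [mem_closedBall_iff_norm'] at hk
  have hre := (RCLike.re_le_norm _).trans hk
  rw [map_sub, RCLike.ofReal_re] at hre
  linarith [h k]

theorem sum_range_abs_sub {M : Type*} [AddCommMonoid M] (f : ℤ → M) {i n : ℕ} (hi : i < n) :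
    ∑ j ∈ range n, f |(i : ℤ) - j| =
      f 0 + (∑ k ∈ range i, f (k + 1) + ∑ k ∈ range (n - 1 - i), f (k + 1)) := by
  obtain ⟨m, rfl⟩ : ∃ m, n = i + (m + 1) := ⟨n - 1 - i, by omega⟩
  rw [sum_range_add, sum_range_succ', ← sum_range_reflect, show i + (m + 1) - 1 - i = m by omega]
  have hleft : ∀ j ∈ range i, f |(i : ℤ) - (i - 1 - j : ℕ)| = f (j + 1) := fun j hj => by
    rw [mem_range] at hj; congr 1; rw [abs_eq (by omega)]; omega
  have hright : ∀ k ∈ range m, f |(i : ℤ) - (i + (k + 1) : ℕ)| = f (k + 1) := fun k _ => by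
    congr 1; rw [abs_eq (by omega)]; omega
  rw [sum_congr rfl hleft, sum_congr rfl hright]
  simp only [add_zero, sub_self, abs_zero]
  abel

theorem sum_erase_abs_sub_le {n : ℕ} (f : ℤ → ℝ) (hf : ∀ d, 0 ≤ f d) (i : Fin n) :
    ∑ j ∈ univ.erase i, f |(i : ℤ) - j| ≤ 2 * ∑ k ∈ range (n - 1), f (k + 1) := by
  have hsum := Fin.sum_univ_eq_sum_range (fun j => f |(i : ℤ) - j|) n
  rw [← add_sum_erase _ _ (mem_univ i), sum_range_abs_sub f i.isLt] at hsum
  have hle : ∀ l ≤ n - 1, ∑ k ∈ range l, f (k + 1) ≤ ∑ k ∈ range (n - 1), f (k + 1) :=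
    fun l hl => sum_le_sum_of_subset_of_nonneg (range_subset_range.2 hl) fun k _ _ => hf _
  simp only [sub_self, abs_zero, add_right_inj] at hsum
  rw [hsum]
  linarith [hle i (by omega), hle (n - 1 - i) (by omega)]

theorem Real.neg_one_pow_mul_Gamma_sub_natCast_pos {x : ℝ} (hx₀ : 0 < x) (hx₁ : x < 1) (k : ℕ) :
    0 < (-1) ^ k * Gamma (x - k) := by
  induction k with
  | zero => simpa using Gamma_pos_of_pos hx₀
  | succ k ih =>
    have hrec : Gamma (x - k) = (x - (k + 1 : ℕ)) * Gamma (x - (k + 1 : ℕ)) := by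
      rw [← Gamma_add_one (by push_cast; linarith)]
      push_cast; ring_nf
    have hfac : (0 : ℝ) < (k + 1 : ℕ) - x := by push_cast; linarith
    rw [hrec, show (-1) ^ k * ((x - (k + 1 : ℕ)) * Gamma (x - (k + 1 : ℕ))) =
      ((k + 1 : ℕ) - x) * ((-1) ^ (k + 1) * Gamma (x - (k + 1 : ℕ))) by ring] at ih
    exact (mul_pos_iff_of_pos_left hfac).1 ih

lemma neg_one_pow_mul_div (k : ℕ) (x y : ℝ) : (-1) ^ k * x / y = x / ((-1) ^ k * y) := by
  rcases neg_one_pow_eq_or ℝ k with h | h <;> rw [h] <;> ring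

theorem gcoef_natCast (α : ℝ) (k : ℕ) : gcoef α k =
    (-1) ^ k * Gamma (1 + α) / (Gamma (α / 2 - k + 1) * Gamma (α / 2 + k + 1)) := by
  simp [gcoef]

/-- Closed form of `g₀/2 + ∑_{k=1}^M g_k`, with `(-1)^M` moved into the denominator so that
positivity is visible from `Real.neg_one_pow_mul_Gamma_sub_natCast_pos`. -/
noncomputable def gcoefHalfSum (α : ℝ) (k : ℕ) : ℝ :=
  Gamma α / ((-1) ^ k * Gamma (α / 2 - k) * Gamma (α / 2 + k + 1))

theorem gcoef_succ_eq (α : ℝ) (k : ℕ) : gcoef α (k + 1) =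
    -(Gamma (1 + α) / ((-1) ^ k * Gamma (α / 2 - k) * Gamma (α / 2 + k + 2))) := by
  have h := gcoef_natCast α (k + 1)
  push_cast at h
  rw [h, pow_succ, show α / 2 - (k + 1) + 1 = α / 2 - k by ring,
    show α / 2 + (k + 1) + 1 = α / 2 + k + 2 by ring, mul_neg_one, neg_mul, neg_div,
    neg_one_pow_mul_div, mul_assoc]

section
variable {α : ℝ} (hα₀ : 0 < α) (hα₂ : α < 2)
include hα₀ hα₂

theorem gcoefHalfSum_pos (k : ℕ) : 0 < gcoefHalfSum α k :=
  div_pos (Gamma_pos_of_pos hα₀) <| mul_pos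
    (neg_one_pow_mul_Gamma_sub_natCast_pos (by linarith) (by linarith) k)
    (Gamma_pos_of_pos (by positivity))

theorem gcoef_succ_neg (k : ℕ) : gcoef α (k + 1) < 0 := by
  rw [gcoef_succ_eq, neg_lt_zero]
  exact div_pos (Gamma_pos_of_pos (by linarith)) <| mul_pos
    (neg_one_pow_mul_Gamma_sub_natCast_pos (by linarith) (by linarith) k)
    (Gamma_pos_of_pos (by positivity))

omit hα₂ in
theorem gcoef_zero : gcoef α 0 = 2 * gcoefHalfSum α 0 := by
  have hΓ : Gamma (α / 2) ≠ 0 := (Gamma_pos_of_pos (by positivity)).ne'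
  rw [show (0 : ℤ) = (0 : ℕ) by rfl, gcoef_natCast, gcoefHalfSum, add_comm 1 α,
    Gamma_add_one hα₀.ne']
  simp only [pow_zero, Nat.cast_zero, sub_zero, add_zero, one_mul]
  rw [Gamma_add_one (by positivity)]
  field_simp

theorem gcoef_succ (k : ℕ) : gcoef α (k + 1) = gcoefHalfSum α (k + 1) - gcoefHalfSum α k := by
  have hsign := neg_one_pow_mul_Gamma_sub_natCast_pos (x := α / 2) (by linarith) (by linarith)
    (k + 1)
  have hG : Gamma (α / 2 - (k + 1)) ≠ 0 := by
    push_cast at hsign; exact right_ne_zero_of_mul hsign.ne'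
  have hP : Gamma (α / 2 + k + 1) ≠ 0 := (Gamma_pos_of_pos (by positivity)).ne'
  have ha : α / 2 - (k + 1) ≠ 0 := by linarith
  have hb : α / 2 + k + 1 ≠ 0 := by positivity
  rw [gcoef_succ_eq, gcoefHalfSum, gcoefHalfSum]
  push_cast
  rw [add_comm 1 α, Gamma_add_one hα₀.ne',
    show α / 2 - k = α / 2 - (k + 1) + 1 by ring, Gamma_add_one ha,
    show α / 2 + k + 2 = α / 2 + k + 1 + 1 by ring, Gamma_add_one hb,
    show α / 2 + (k + 1) + 1 = α / 2 + k + 1 + 1 by ring, Gamma_add_one hb]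
  have hs : (-1 : ℝ) ^ k ≠ 0 := by positivity
  rw [pow_succ, div_sub_div _ _ (by simp [*]) (by simp [*]), neg_div',
    div_eq_div_iff (by simp [*]) (by simp [*])]
  ring

theorem gcoef_zero_add_two_mul_sum (M : ℕ) :
    gcoef α 0 + 2 * ∑ k ∈ range M, gcoef α (k + 1) = 2 * gcoefHalfSum α M := by
  rw [sum_congr rfl fun k _ => gcoef_succ hα₀ hα₂ k, sum_range_sub, gcoef_zero hα₀]
  ring

theorem two_mul_sum_abs_gcoef_succ_lt (M : ℕ) :
    2 * ∑ k ∈ range M, |gcoef α (k + 1)| < gcoef α 0 := by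
  rw [sum_congr rfl fun k _ => abs_of_neg (gcoef_succ_neg hα₀ hα₂ k), sum_neg_distrib]
  linarith [gcoef_zero_add_two_mul_sum hα₀ hα₂ M, gcoefHalfSum_pos hα₀ hα₂ M]

end

theorem stmt_18_general (α : ℝ) (hα₁ : 1 < α) (hα₂ : α < 2) (N : ℕ)
    (T : Matrix (Fin (N - 1)) (Fin (N - 1)) ℝ)
    (hT : ∀ i j, T i j = gcoef α |(i : ℤ) - (j : ℤ)|) :
    T.PosDef := by
  have hα₀ : 0 < α := by linarith
  have hT_herm : T.IsHermitian := Matrix.IsHermitian.ext fun i j => by simp [hT, abs_sub_comm]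
  refine hT_herm.posDef_of_sum_row_lt_diag fun i => ?_
  simp only [hT, sub_self, abs_zero, RCLike.re_to_real, Real.norm_eq_abs]
  calc ∑ j ∈ univ.erase i, |gcoef α (|(i : ℤ) - j|)|
      ≤ 2 * ∑ k ∈ range (N - 1 - 1), |gcoef α (k + 1)| :=
        sum_erase_abs_sub_le _ (fun _ => abs_nonneg _) i
    _ < gcoef α 0 := two_mul_sum_abs_gcoef_succ_lt hα₀ hα₂ _

theorem stmt_18 (α : ℝ) (hα₁ : 1 < α) (hα₂ : α < 2) (N : ℕ) (hN : 2 ≤ N)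
    (T : Matrix (Fin (N - 1)) (Fin (N - 1)) ℝ)
    (hT : ∀ i j, T i j = gcoef α |(i : ℤ) - (j : ℤ)|) :
    T.PosDef :=
  stmt_18_general α hα₁ hα₂ N T hT
end
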